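/- Let B_n be the n×n tridiagonal matrix with main diagonal entries (1, 3, 1, ..., 1), subdiagonal entries all -1, and superdiagonal entries all 2. Then for n ≥ 2, det(B_n) = j_n, the n-th Jacobsthal-Lucas number. -/
import Mathlib

def jacobsthalLucas : ℕ → ℤ
  | 0 => 2
  | 1 => 1
  | n + 2 => jacobsthalLucas (n + 1) + 2 * jacobsthalLucas n

def Bmat (n : ℕ) : Matrix (Fin n) (Fin n) ℤ :=
  Matrix.of fun i j =>
    if (i : ℕ) = (j : ℕ) then (if (i : ℕ) = 1 then 3 else 1)
    else if (i : ℕ) = (j : ℕ) + 1 then -1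
    else if (j : ℕ) = (i : ℕ) + 1 then 2
    else 0

lemma Bmat_apply (n : ℕ) (i j : Fin n) : Bmat n i j =
    if (i : ℕ) = (j : ℕ) then (if (i : ℕ) = 1 then 3 else 1)
    else if (i : ℕ) = (j : ℕ) + 1 then -1
    else if (j : ℕ) = (i : ℕ) + 1 then 2
    else 0 := rfl

lemma key (n : ℕ) (hn : 1 ≤ n) :
    (Bmat (n + 2)).det = (Bmat (n + 1)).det + 2 * (Bmat n).det := by
  rw [Matrix.det_succ_row (Bmat (n + 2)) (Fin.last (n + 1))]
  rw [Fin.sum_univ_castSucc, Fin.sum_univ_castSucc]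
  have hzero : ∀ j : Fin n,
      (-1 : ℤ) ^ ((Fin.last (n + 1) : ℕ) + ((j.castSucc.castSucc : Fin (n+2)) : ℕ)) *
        Bmat (n + 2) (Fin.last (n + 1)) j.castSucc.castSucc *
        ((Bmat (n+2)).submatrix (Fin.last (n + 1)).succAbove (j.castSucc.castSucc).succAbove).det = 0 := by
    intro j
    have hj : (j : ℕ) < n := j.isLt
    have : Bmat (n + 2) (Fin.last (n + 1)) j.castSucc.castSucc = 0 := by
      rw [Bmat_apply]
      simp only [Fin.val_last, Fin.coe_castSucc]
      split_ifs <;> omega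
    rw [this]; ring
  rw [Finset.sum_congr rfl (fun j _ => hzero j), Finset.sum_const_zero, zero_add]
  -- term at castSucc last and term at last
  have hlast : Bmat (n + 2) (Fin.last (n + 1)) (Fin.last (n + 1)) = 1 := by
    rw [Bmat_apply]
    simp only [Fin.val_last]
    split_ifs <;> omega
  have hsub : Bmat (n + 2) (Fin.last (n + 1)) (Fin.last n).castSucc = -1 := by
    rw [Bmat_apply]
    simp only [Fin.val_last, Fin.coe_castSucc]
    split_ifs <;> omega
  have hminor1 : (Bmat (n+2)).submatrix (Fin.last (n + 1)).succAbove
      (Fin.last (n + 1)).succAbove = Bmat (n + 1) := by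
    ext a b
    simp only [Matrix.submatrix_apply, Fin.succAbove_last, Bmat_apply, Fin.coe_castSucc]
  -- the other minor
  have hminor2 : ((Bmat (n+2)).submatrix (Fin.last (n + 1)).succAbove
      ((Fin.last n).castSucc).succAbove).det = 2 * (Bmat n).det := by
    rw [Matrix.det_succ_column _ (Fin.last n)]
    rw [Finset.sum_eq_single (Fin.last n)]
    · have hcol : ∀ b : Fin (n+1), (((Fin.last n).castSucc : Fin (n+2)).succAbove b : ℕ) =
          if (b : ℕ) < n then (b : ℕ) else n + 1 := by
        intro b
        rcases lt_or_ge (b : ℕ) n with h | h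
        · rw [Fin.succAbove, if_pos]
          · simp [h]
          · simp [Fin.lt_iff_val_lt_val, h]
        · have hb : (b : ℕ) = n := by omega
          rw [Fin.succAbove, if_neg]
          · simp [hb]
          · simp [Fin.lt_iff_val_lt_val, hb]
      have hentry : (Bmat (n+2)).submatrix (Fin.last (n + 1)).succAbove
          ((Fin.last n).castSucc).succAbove (Fin.last n) (Fin.last n) = 2 := by
        simp only [Matrix.submatrix_apply, Fin.succAbove_last, Bmat_apply]
        rw [hcol]
        simp only [Fin.val_last, Fin.coe_castSucc]
        split_ifs <;> omega
      rw [hentry]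
      have hminor3 : ((Bmat (n+2)).submatrix (Fin.last (n + 1)).succAbove
          ((Fin.last n).castSucc).succAbove).submatrix (Fin.last n).succAbove
          (Fin.last n).succAbove = Bmat n := by
        ext a b
        simp only [Matrix.submatrix_apply, Fin.succAbove_last, Bmat_apply, Fin.coe_castSucc]
        rw [hcol]
        simp [Fin.coe_castSucc, b.isLt]
      rw [hminor3]
      simp only [Fin.val_last]
      rw [show (-1 : ℤ) ^ (n + n) = 1 by rw [← two_mul, pow_mul]; norm_num]
      ring
    · intro b _ hb
      have hbn : (b : ℕ) < n := by
        have h1 := b.isLt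
        have h2 : (b : ℕ) ≠ n := fun h =>
          hb (Fin.ext (h.trans (Fin.val_last n).symm))
        omega
      have : (Bmat (n+2)).submatrix (Fin.last (n + 1)).succAbove
          ((Fin.last n).castSucc).succAbove b (Fin.last n) = 0 := by
        simp only [Matrix.submatrix_apply, Fin.succAbove_last, Bmat_apply]
        have hcol : ((((Fin.last n).castSucc : Fin (n+2)).succAbove (Fin.last n)) : ℕ) = n + 1 := by
          rw [Fin.succAbove, if_neg]
          · simp
          · simp [Fin.lt_iff_val_lt_val]
        rw [hcol]
        simp only [Fin.coe_castSucc]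
        split_ifs <;> omega
      rw [this]; ring
    · intro h; exact absurd (Finset.mem_univ _) h
  rw [hminor1, hminor2, hlast, hsub]
  simp only [Fin.val_last, Fin.coe_castSucc]
  have h1 : (-1 : ℤ) ^ (n + 1 + (n + 1)) = 1 := by
    rw [show n + 1 + (n + 1) = 2 * (n + 1) by ring, pow_mul]; norm_num
  have h2 : (-1 : ℤ) ^ (n + 1 + n) = -1 := by
    rw [show n + 1 + n = 2 * n + 1 by ring, pow_succ, pow_mul]; norm_num
  rw [h1, h2]
  ring

theorem det_Bmat (n : ℕ) (hn : 2 ≤ n) : (Bmat n).det = jacobsthalLucas n := by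
  induction n using Nat.strong_induction_on with
  | _ n ih =>
    match n, hn with
    | 2, _ => decide
    | 3, _ => decide
    | (m + 4), _ =>
      rw [key (m + 2) (by omega), ih (m + 3) (by omega) (by omega),
        ih (m + 2) (by omega) (by omega)]
      rfl
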